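/- Let P be a Łukasiewicz path, T = τ(P), and for each i let u_i be the internal node of T corresponding to the i-th up-step of P under the bijection τ (i.e., the i-th internal node of T in contour/preorder order). Then for every i, the i-th entry of the area vector satisfies Area(P)_i = rthorn(u_i). -/

import Mathlib

/-! ## Plane trees -/

/-- A plane tree: a root together with an ordered (left-to-right) list of subtrees.
A node is a *leaf* if it has no children, and *internal* otherwise. -/
inductive PTree : Type where
  | node : List PTree → PTree


namespace Luka

/-! ## Łukasiewicz paths

A path is encoded by its list of step increments: the step `(1,k)` (an up-step `U_k` of
degree `k`) is encoded by `k : ℤ` with `k ≥ 0`, and the down step `D = (1,-1)` by `-1`. -/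

/-- `P` is a Łukasiewicz path: it is nonempty, uses steps `(1,k)` with `k ≥ -1`,
stays (weakly) above the `x`-axis before its last step, and ends at height `-1`
(so that it goes strictly below the axis only at the last step, which is forced
to be the down-step `D`). -/
def IsLukas (P : List ℤ) : Prop :=
  P ≠ [] ∧ (∀ s ∈ P, -1 ≤ s) ∧ (∀ n, n < P.length → 0 ≤ (P.take n).sum) ∧ P.sum = -1

/-- The degrees of the up-steps of `P`, from left to right (the *profile* of `P`). -/
def upDegs (P : List ℤ) : List ℕ := (P.filter (fun s => 0 ≤ s)).map Int.toNat

/-- The profile multiset `𝔐(P)`: the multiset of degrees of the up-steps of `P`. -/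
def profileM (P : List ℤ) : Multiset ℕ := (upDegs P : Multiset ℕ)

/-- The degree of the first up-step of `P`, if any. -/
def firstUp? (P : List ℤ) : Option ℕ := (upDegs P).head?

/-- The degree of the last up-step of `P`, if any. -/
def lastUp? (P : List ℤ) : Option ℕ := (upDegs P).getLast?

/-- Auxiliary: starting from height `h`, record the starting height of every up-step. -/
def areaVecAux : ℤ → List ℤ → List ℤ
  | _, [] => []
  | h, s :: rest => (if 0 ≤ s then [h] else []) ++ areaVecAux (h + s) rest

/-- The area vector `Area(P)`: the `i`-th entry is the `y`-coordinate of the starting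
point of the `i`-th up-step of `P`. -/
def areaVec (P : List ℤ) : List ℤ := areaVecAux 0 P

/-- `area(P)`: the sum of the entries of the area vector (entries of a Łukasiewicz
path are nonnegative, so taking `Int.toNat` entrywise is harmless). -/
def area (P : List ℤ) : ℕ := ((areaVec P).map Int.toNat).sum

/-- Auxiliary computation of the depth values: `cur` is the depth value of the previous
step (`0` initially), and `stack` holds the pending depth values of the future matching
down-steps (top of the stack = value for the next matching down-step to come).
Reading an up-step `U_k` whose value is `cur` (inherited from the previous step) pushes
the values `cur+1, …, cur+k` for its `k` matching down-steps (its first matching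
down-step, which crosses its topmost interior level, gets `cur+1`, etc.); reading a
down-step pops its value.  The list returned records the value `d_i` of each up-step,
from left to right. -/
def depthVecAux : ℕ → List ℕ → List ℤ → List ℕ
  | _, _, [] => []
  | cur, stack, s :: rest =>
    if 0 ≤ s then
      cur :: depthVecAux cur ((List.range s.toNat).map (fun i => cur + i + 1) ++ stack) rest
    else
      match stack with
      | [] => depthVecAux cur [] rest
      | v :: st => depthVecAux v st rest

/-- The depth vector `Depth(P)`: the values `d_i` at the up-steps of `P`, left to right. -/
def depthVec (P : List ℤ) : List ℕ := depthVecAux 0 [] P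

/-- `depth(P)`: the sum of the entries of the depth vector. -/
def depth (P : List ℤ) : ℕ := (depthVec P).sum

/-- `P ∈ 𝓛_M`. -/
def MemL (M : Multiset ℕ) (P : List ℤ) : Prop := IsLukas P ∧ profileM P = M

/-- `P ∈ 𝓛_{a,M}`: first up-step of degree `a`, profile multiset `M ⊎ {a}`. -/
def MemLa (a : ℕ) (M : Multiset ℕ) (P : List ℤ) : Prop :=
  IsLukas P ∧ firstUp? P = some a ∧ profileM P = a ::ₘ M

/-- `P ∈ 𝓛_{M,b}`: last up-step of degree `b`, profile multiset `M ⊎ {b}`. -/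
def MemLb (M : Multiset ℕ) (b : ℕ) (P : List ℤ) : Prop :=
  IsLukas P ∧ lastUp? P = some b ∧ profileM P = b ::ₘ M

/-- `P ∈ 𝓛_{a,M,b}`: first up-step of degree `a`, last up-step of degree `b`,
profile multiset `M ⊎ {a, b}`. -/
def MemLab (a : ℕ) (M : Multiset ℕ) (b : ℕ) (P : List ℤ) : Prop :=
  IsLukas P ∧ firstUp? P = some a ∧ lastUp? P = some b ∧ profileM P = a ::ₘ b ::ₘ M

/-! ## Plane-tree statistics -/

/-- The (ordered) children of the root of a plane tree. -/
def children : PTree → List PTree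
  | .node ts => ts

/-- The degree of (the root of) a plane tree: its number of children. -/
def numChildren (t : PTree) : ℕ := (children t).length

mutual
/-- Number of internal nodes of a plane tree. -/
def internCount : PTree → ℕ
  | .node [] => 0
  | .node (t :: ts) => 1 + internCountL (t :: ts)
def internCountL : List PTree → ℕ
  | [] => 0
  | t :: ts => internCount t + internCountL ts
end

mutual
/-- `lthornT T` = the sum of `lthorn(u)` over all internal nodes `u` of `T`, where
`lthorn(u)` is the number of descending edges of strict ancestors `v` of `u` lying to
the left of the path from `v` to `u`.  (Every internal node of the subtree rooted at
the `i`-th child (0-indexed) of a node gains `i` left thorns from that node.) -/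
def lthornT : PTree → ℕ
  | .node ts => lthornL 0 ts
def lthornL : ℕ → List PTree → ℕ
  | _, [] => 0
  | i, t :: ts => lthornT t + i * internCount t + lthornL (i + 1) ts
end

mutual
/-- `rthornT T` = the sum of `rthorn(u)` over all internal nodes `u` of `T`, where
`rthorn(u)` is the number of descending edges of strict ancestors `v` of `u` lying to
the right of the path from `v` to `u`. -/
def rthornT : PTree → ℕ
  | .node ts => rthornL ts
def rthornL : List PTree → ℕ
  | [] => 0
  | t :: ts => rthornT t + ts.length * internCount t + rthornL ts
end

mutual
/-- The list of the values `lthorn(u)` for the internal nodes `u` of `T`, in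
contour-walk (preorder) order. -/
def lthornList : PTree → List ℕ
  | .node [] => []
  | .node (t :: ts) => 0 :: lthornLL 0 (t :: ts)
def lthornLL : ℕ → List PTree → List ℕ
  | _, [] => []
  | i, t :: ts => (lthornList t).map (· + i) ++ lthornLL (i + 1) ts
end

mutual
/-- The list of the values `rthorn(u)` for the internal nodes `u` of `T`, in
contour-walk (preorder) order. -/
def rthornList : PTree → List ℕ
  | .node [] => []
  | .node (t :: ts) => 0 :: rthornLL (t :: ts)
def rthornLL : List PTree → List ℕ
  | [] => []
  | t :: ts => (rthornList t).map (· + ts.length) ++ rthornLL ts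
end

/-! ## The bijections `λ` and `τ` -/

mutual
/-- `λ`: record each node of the tree at its first visit in the left-to-right contour
walk: `U_k` (i.e. `k`) for an internal node with `k+1` children, `D` (i.e. `-1`)
for a leaf. -/
def lambdaT : PTree → List ℤ
  | .node ts => ((ts.length : ℤ) - 1) :: lambdaL ts
def lambdaL : List PTree → List ℤ
  | [] => []
  | t :: ts => lambdaT t ++ lambdaL ts
end

/-- Auxiliary for `τ`: reading the path from right to left, maintain the stack of the
already-built subtrees (in left-to-right order); a down-step `D` creates a leaf and an
up-step `U_k` grabs the `k+1` topmost subtrees as its children.  This builds the same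
tree as the left-to-right "leftmost bud" construction. -/
def tauStack (P : List ℤ) : List PTree :=
  P.foldr (fun s st =>
    if s < 0 then PTree.node [] :: st
    else PTree.node (st.take (s.toNat + 1)) :: st.drop (s.toNat + 1)) []

/-- `τ`: the plane tree associated with a Łukasiewicz path. -/
def tau (P : List ℤ) : PTree := (tauStack P).headD (.node [])

mutual
/-- The mirror of a plane tree: reverse the left-to-right order of the children of
every internal node. -/
def mir : PTree → PTree
  | .node ts => .node (mirL ts).reverse
def mirL : List PTree → List PTree
  | [] => []
  | t :: ts => mir t :: mirL ts
end

mutual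
/-- The subtrees rooted at the internal nodes of `T`, in contour-walk (preorder)
order. -/
def internalSubtrees : PTree → List PTree
  | .node [] => []
  | .node (t :: ts) => .node (t :: ts) :: internalSubtreesL (t :: ts)
def internalSubtreesL : List PTree → List PTree
  | [] => []
  | t :: ts => internalSubtrees t ++ internalSubtreesL ts
end

/-- The multiset of degrees of the non-root internal nodes of `T`. -/
def nonRootInternalDegs (T : PTree) : Multiset ℕ :=
  (((internalSubtreesL (children T)).map numChildren : List ℕ) : Multiset ℕ)

/-! ## Lodestars and the lodestar swap -/

/-- A node is a lodestar-type node if it is internal and all its children are leaves. -/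
def isLodestarNode (t : PTree) : Bool :=
  !(children t).isEmpty && (children t).all (fun c => (children c).isEmpty)

mutual
/-- The subtree rooted at the *left lodestar* of `T`: the first internal node, in
contour-walk (preorder) order, all of whose children are leaves (if it exists). -/
def leftLode? : PTree → Option PTree
  | .node ts =>
    if isLodestarNode (.node ts) then some (.node ts) else leftLodeL? ts
def leftLodeL? : List PTree → Option PTree
  | [] => none
  | t :: ts =>
    match leftLode? t with
    | some r => some r
    | none => leftLodeL? ts
end

mutual
/-- The subtree rooted at the *right lodestar* of `T`: the last internal node, in
contour-walk (preorder) order, all of whose children are leaves (if it exists). -/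
def rightLode? : PTree → Option PTree
  | .node ts =>
    match rightLodeL? ts with
    | some r => some r
    | none => if isLodestarNode (.node ts) then some (.node ts) else none
def rightLodeL? : List PTree → Option PTree
  | [] => none
  | t :: ts =>
    match rightLodeL? ts with
    | some r => some r
    | none => rightLode? t
end

mutual
/-- Replace the left lodestar of `T` (first preorder all-leaf-children internal node)
by the tree `r`; `none` if `T` has no internal node. -/
def replF : PTree → PTree → Option PTree
  | r, .node ts =>
    if isLodestarNode (.node ts) then some r
    else (replFL r ts).map PTree.node
def replFL : PTree → List PTree → Option (List PTree)
  | _, [] => none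
  | r, t :: ts =>
    match replF r t with
    | some t' => some (t' :: ts)
    | none => (replFL r ts).map (t :: ·)
end

mutual
/-- Replace the right lodestar of `T` (last preorder all-leaf-children internal node)
by the tree `r`; `none` if `T` has no internal node. -/
def replL : PTree → PTree → Option PTree
  | r, .node ts =>
    match replLL r ts with
    | some ts' => some (.node ts')
    | none => if isLodestarNode (.node ts) then some r else none
def replLL : PTree → List PTree → Option (List PTree)
  | _, [] => none
  | r, t :: ts =>
    match replLL r ts with
    | some ts' => some (t :: ts')
    | none => (replL r t).map (· :: ts)
end

/-- The lodestar swap: exchange the subtrees rooted at the left lodestar and the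
right lodestar of `T` (each a node together with its pendant leaves). -/
def lodeSwap (T : PTree) : PTree :=
  match leftLode? T, rightLode? T with
  | some L, some R => ((replF R T).bind (replL L)).getD T
  | _, _ => T

end Luka

/-!
Read from right to left, `τ` keeps a stack of finished subtrees, and a suffix of the path
that starts at height `h` leaves exactly `h + 1` of them. The up-step read at height `h`
becomes the root of a new tree followed by the `h` remaining trees of the stack; these are
precisely its right thorns, and every node below it gains the same `h` thorns. Hence the
area vector of such a suffix is the right-thorn list of the forest it builds, where the
trees of the forest count as right siblings of each other.
-/

namespace Luka

@[simp]
lemma rthornLL_nil : rthornLL [] = [] := by rw [rthornLL]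

@[simp]
lemma rthornLL_cons (t : PTree) (ts : List PTree) :
    rthornLL (t :: ts) = (rthornList t).map (· + ts.length) ++ rthornLL ts := by
  rw [rthornLL]

lemma rthornLL_append (A D : List PTree) :
    rthornLL (A ++ D) = (rthornLL A).map (· + D.length) ++ rthornLL D := by
  induction A with
  | nil => simp
  | cons t ts ih => simp [ih]

@[simp]
lemma rthornLL_leaf_cons (D : List PTree) : rthornLL (.node [] :: D) = rthornLL D := by
  simp [rthornList]

lemma rthornLL_node_cons {A : List PTree} (hA : A ≠ []) (D : List PTree) :
    rthornLL (.node A :: D) = D.length :: rthornLL (A ++ D) := by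
  obtain ⟨t, ts, rfl⟩ := List.exists_cons_of_ne_nil hA
  rw [rthornLL_cons, rthornList, List.map_cons, zero_add, rthornLL_append, List.cons_append]

/-- `Q` is the remainder of a Łukasiewicz path, read from height `h`. -/
def IsLukasFrom (h : ℤ) (Q : List ℤ) : Prop :=
  (∀ s ∈ Q, -1 ≤ s) ∧ (∀ n, n < Q.length → 0 ≤ h + (Q.take n).sum) ∧ h + Q.sum = -1

lemma IsLukas.isLukasFrom_zero {P : List ℤ} (hP : IsLukas P) : IsLukasFrom 0 P := by
  obtain ⟨-, hsteps, hpre, hsum⟩ := hP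
  exact ⟨hsteps, by simpa using hpre, by simpa using hsum⟩

namespace IsLukasFrom

variable {h s : ℤ} {R : List ℤ}

lemma height_nonneg (hQ : IsLukasFrom h (s :: R)) : 0 ≤ h := by
  simpa using hQ.2.1 0 (by simp)

lemma step_ge (hQ : IsLukasFrom h (s :: R)) : -1 ≤ s :=
  hQ.1 s List.mem_cons_self

lemma tail (hQ : IsLukasFrom h (s :: R)) : IsLukasFrom (h + s) R := by
  obtain ⟨hsteps, hpre, hsum⟩ := hQ
  refine ⟨fun t ht => hsteps t (List.mem_cons_of_mem _ ht), fun n hn => ?_, ?_⟩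
  · simpa [add_assoc] using hpre (n + 1) (by simpa using hn)
  · simp only [List.sum_cons] at hsum
    linarith

end IsLukasFrom

lemma tauStack_cons (s : ℤ) (R : List ℤ) :
    tauStack (s :: R) =
      if s < 0 then .node [] :: tauStack R
      else .node ((tauStack R).take (s.toNat + 1)) :: (tauStack R).drop (s.toNat + 1) :=
  rfl

lemma length_tauStack {h : ℤ} {Q : List ℤ} (hQ : IsLukasFrom h Q) :
    ((tauStack Q).length : ℤ) = h + 1 := by
  induction Q generalizing h with
  | nil =>
    have hsum := hQ.2.2
    simp only [List.sum_nil, add_zero] at hsum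
    simp [tauStack, hsum]
  | cons s R ih =>
    have hlen := ih hQ.tail
    have := hQ.height_nonneg
    have := hQ.step_ge
    rw [tauStack_cons]
    split_ifs <;> simp only [List.length_cons, List.length_drop] <;> omega

lemma areaVecAux_eq_rthornLL_tauStack {h : ℤ} {Q : List ℤ} (hQ : IsLukasFrom h Q) :
    areaVecAux h Q = (rthornLL (tauStack Q)).map Int.ofNat := by
  induction Q generalizing h with
  | nil => simp [areaVecAux, tauStack]
  | cons s R ih =>
    have hR := ih hQ.tail
    have hlen := length_tauStack hQ.tail
    have := hQ.height_nonneg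
    rw [areaVecAux, tauStack_cons]
    by_cases hup : 0 ≤ s
    · have hA : (tauStack R).take (s.toNat + 1) ≠ [] :=
        List.ne_nil_of_length_pos (by rw [List.length_take]; omega)
      rw [if_pos hup, if_neg (by omega), rthornLL_node_cons hA, List.take_append_drop, hR]
      simp only [List.length_drop, List.singleton_append, List.map_cons]
      congr 1
      simp only [Int.ofNat_eq_natCast]
      omega
    · rw [if_neg hup, if_pos (by omega), rthornLL_leaf_cons, ← hR, List.nil_append]

end Luka

open Luka in
/-- **Refined Proposition 3.3.**  Let `P` be a Łukasiewicz path and `T = τ(P)`.  The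
`i`-th up-step of `P` corresponds to the `i`-th internal node `u_i` of `T` in
contour-walk (preorder) order, and for every `i` one has `Area(P)_i = rthorn(u_i)`:
the area vector coincides, entry by entry, with the list of right-thorn numbers of the
internal nodes of `T` in preorder. -/
theorem areaVec_eq_rthornList_tau (P : List ℤ) (hP : IsLukas P) :
    ∀ i : ℕ, (areaVec P)[i]? = ((rthornList (tau P))[i]?).map Int.ofNat := by
  have hP₀ := hP.isLukasFrom_zero
  obtain ⟨T, hT⟩ : ∃ T, tauStack P = [T] :=
    List.length_eq_one_iff.mp (by have := length_tauStack hP₀; omega)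
  have harea : areaVec P = (rthornList (tau P)).map Int.ofNat := by
    rw [areaVec, areaVecAux_eq_rthornLL_tauStack hP₀, tau, hT]
    simp
  intro i
  rw [harea, List.getElem?_map]
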